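/- (Counting squares and cubes.) For N ≥ 1 let c(N) be the number of distinct words of the form ωω (ω a nonempty finite word) that have an occurrence in D∞ starting at some position in {1, …, N}. Then for every N ≥ 1: c(N+1) − c(N) = 1 if there exists m ≥ 1 with 2^m ≤ N < 3·2^{m−1}, and c(N+1) − c(N) = 0 otherwise (in particular for 3·2^{m−1} ≤ N < 2^{m+1}). Moreover, the number of distinct words of the form ωωω (ω nonempty) having an occurrence starting in {1, …, N} also equals c(N). -/

import Mathlib

namespace PD

/-- The period-doubling substitution on the alphabet `Bool`,
where `false` stands for the letter `a` and `true` for the letter `b`: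
`σ(a) = ab`, `σ(b) = aa`. -/
def sub : Bool → List Bool
  | false => [false, true]
  | true  => [false, false]

/-- The substitution applied to a finite word. -/
def subW (w : List Bool) : List Bool := w.flatMap sub

/-- `A m = σ^m(a)`. -/
def A (m : ℕ) : List Bool := subW^[m] [false]

/-- `B m = σ^m(b)`. -/
def B (m : ℕ) : List Bool := subW^[m] [true]

/-- The doubling sequence `D∞` (0-indexed: `D n` is the `(n+1)`-th letter),
the fixed point of `σ` beginning with `a`; `A m` is a prefix of `A (m+1)`,
and `A (n+1)` has length `2^(n+1) > n`. -/
def D (n : ℕ) : Bool := (A (n + 1)).getD n false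

/-- `δ m`, the last letter of `A m`. -/
def delta (m : ℕ) : Bool := (A m).getLastD false

/-- The envelope words (`i ∈ {1,2}`): `E m 1 = A m` minus its last letter,
`E m 2 = A (m-1) ++ (A m` minus its last letter `)`. -/
def E (m i : ℕ) : List Bool :=
  if i = 1 then (A m).dropLast else A (m - 1) ++ (A m).dropLast

/-- `w` occurs at the (1-indexed) position `j` in the finite word `τ`. -/
def OccursIn (w τ : List Bool) (j : ℕ) : Prop :=
  1 ≤ j ∧ (τ.drop (j - 1)).take w.length = w

/-- `w` occurs at the (1-indexed) position `j` in the doubling sequence. -/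
def OccursD (w : List Bool) (j : ℕ) : Prop :=
  1 ≤ j ∧ ∀ k < w.length, D (j - 1 + k) = w.getD k false

/-- `w` is a factor of the doubling sequence. -/
def FactorD (w : List Bool) : Prop := ∃ j, OccursD w j

/-- `L w p`: the (1-indexed) starting position of the `p`-th occurrence of `w`
in the doubling sequence, occurrences being ordered by starting position.
(Each factor occurs infinitely often, so `Nat.nth` enumerates all occurrences
in increasing order.) -/
noncomputable def L (w : List Bool) (p : ℕ) : ℕ := Nat.nth (OccursD w) (p - 1)

/-- The strict total order on envelope words:
`E m₁ i₁ ⊏ E m₂ i₂` iff `m₁ < m₂`, or `m₁ = m₂` and `i₁ < i₂`. -/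
def EnvLt (m₁ i₁ m₂ i₂ : ℕ) : Prop := m₁ < m₂ ∨ (m₁ = m₂ ∧ i₁ < i₂)

/-- `Env(w) = E m i`: the envelope word `E m i` is the `⊏`-minimal envelope
word containing `w` as a factor. -/
def IsEnv (w : List Bool) (m i : ℕ) : Prop :=
  1 ≤ m ∧ (i = 1 ∨ i = 2) ∧ w <:+: E m i ∧
    ∀ m' i', 1 ≤ m' → (i' = 1 ∨ i' = 2) → EnvLt m' i' m i → ¬ w <:+: E m' i'

/-- The substitution `φ₁(a) = a`, `φ₁(b) = bb`. -/
def phi1 : Bool → List Bool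
  | false => [false]
  | true  => [true, true]

/-- `Θ₁ = φ₁(D∞)` (0-indexed): `φ₁(A (n+1))` is a prefix of `Θ₁` of length `> n`. -/
def Theta1 (n : ℕ) : Bool := ((A (n + 1)).flatMap phi1).getD n false

/-- The substitution `φ₂(a) = ab`, `φ₂(b) = acac`, over the alphabet `Fin 3`
where `0` stands for `a`, `1` for `b` and `2` for `c`. -/
def phi2 : Bool → List (Fin 3)
  | false => [0, 1]
  | true  => [0, 2, 0, 2]

/-- `Θ₂ = φ₂(D∞)` (0-indexed). -/
def Theta2 (n : ℕ) : Fin 3 := ((A (n + 1)).flatMap phi2).getD n 0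

/-- `N₁(x,p)`: the number of letters `x` among the first `p` letters of `Θ₁`. -/
def N1 (x : Bool) (p : ℕ) : ℕ := ((List.range p).map Theta1).count x

/-- `N₂(x,p)`: the number of letters `x` among the first `p` letters of `Θ₂`. -/
def N2 (x : Fin 3) (p : ℕ) : ℕ := ((List.range p).map Theta2).count x

end PD

open PD
/-- `csq N`: the number of distinct squares `ww` (with `w` nonempty) having an
occurrence in the doubling sequence starting at some (1-indexed) position in
`{1, …, N}`. -/
noncomputable def csq (N : ℕ) : ℕ :=
  Set.ncard {v : List Bool |
    (∃ w : List Bool, w ≠ [] ∧ v = w ++ w) ∧ ∃ j, 1 ≤ j ∧ j ≤ N ∧ OccursD v j}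

/-- `ccube N`: the number of distinct cubes `www` (with `w` nonempty) having an
occurrence in the doubling sequence starting at some position in `{1, …, N}`. -/
noncomputable def ccube (N : ℕ) : ℕ :=
  Set.ncard {v : List Bool |
    (∃ w : List Bool, w ≠ [] ∧ v = w ++ w ++ w) ∧ ∃ j, 1 ≤ j ∧ j ≤ N ∧ OccursD v j}

/-!
Index `D` from `0`, so that `D (2n) = a` and `D (2n+1)` is the letter other than `D n`. If `ww`
occurs at `t`, its letters at odd positions form a square of half the length at `t / 2`, and an
odd half-length `q > 1` is impossible: all odd-indexed letters of the square would be `a`, giving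
two consecutive letters `b` in `D`. Hence `|w| = 2^e` and `D (t / 2^(e+1)) = b`.

If `D n = b` then `D (2^(e+1) n + r) = D (r mod 2^e)` for `r < 4·2^e - 1`, because
`σ^(e+1)(b) = σ^e(a) σ^e(a)`, followed by `σ^(e+1)(a) = σ^e(a) σ^e(b)`, and `σ^e(b)` differs
from `σ^e(a)` only in its last letter; as `D 1 = b`, this applies at `n = 1` too. So `w` is the
factor `root e o` of length `2^e` at position `2^(e+1) + o`, `o = t mod 2^e`, where it first
occurs, already as a cube. Distinct `o` give distinct roots because `D` has no fourth powers.
Squares and cubes starting in `[1, N]` are therefore both counted by the pairs `(e, o)` with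
`o < 2^e` and `2^(e+1) + o < N`, and going from `N` to `N + 1` adds a pair exactly when
`2^(e+1) ≤ N < 3·2^e`.
-/

namespace PD

lemma A_succ (m : ℕ) : A (m + 1) = subW (A m) := Function.iterate_succ_apply' _ _ _

@[simp] lemma subW_cons (x : Bool) (w : List Bool) : subW (x :: w) = sub x ++ subW w :=
  List.flatMap_cons

lemma length_subW (w : List Bool) : (subW w).length = 2 * w.length := by
  induction w with
  | nil => rfl
  | cons x w ih => cases x <;> simp [sub, ih] <;> ring

lemma length_A (m : ℕ) : (A m).length = 2 ^ m := by
  induction m with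
  | zero => rfl
  | succ m ih => rw [A_succ, length_subW, ih, pow_succ, mul_comm]

lemma subW_isPrefix {u v : List Bool} (h : u <+: v) : subW u <+: subW v := by
  obtain ⟨t, rfl⟩ := h
  exact ⟨subW t, (List.flatMap_append ..).symm⟩

lemma A_isPrefix_succ (m : ℕ) : A m <+: A (m + 1) := by
  induction m with
  | zero => exact ⟨[true], rfl⟩
  | succ m ih => rw [A_succ, A_succ (m + 1)]; exact subW_isPrefix ih

lemma A_isPrefix {m m' : ℕ} (h : m ≤ m') : A m <+: A m' := by
  induction h with
  | refl => exact List.prefix_rfl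
  | step _ ih => exact ih.trans (A_isPrefix_succ _)

lemma getD_subW_two_mul (w : List Bool) (i : ℕ) : (subW w).getD (2 * i) false = false := by
  induction w generalizing i with
  | nil => rfl
  | cons x w ih =>
    cases i with
    | zero => cases x <;> rfl
    | succ i => cases x <;> simpa [sub, Nat.mul_succ] using ih i

lemma getD_subW_two_mul_add_one {w : List Bool} {i : ℕ} (h : i < w.length) :
    (subW w).getD (2 * i + 1) false = !w.getD i false := by
  induction w generalizing i with
  | nil => simp at h
  | cons x w ih =>
    cases i with
    | zero => cases x <;> rfl
    | succ i => cases x <;> simpa [sub, Nat.mul_succ] using ih (by simpa using h)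

lemma getD_A_of_le {k k' n : ℕ} (hk : k ≤ k') (hn : n < 2 ^ k) :
    (A k).getD n false = (A k').getD n false := by
  have hn' : n < (A k).length := by rwa [length_A]
  rw [List.getD_eq_getElem _ _ hn', (A_isPrefix hk).getElem hn', List.getD_eq_getElem]

lemma getD_A {m n : ℕ} (h : n < 2 ^ m) : (A m).getD n false = D n := by
  have hn : n < 2 ^ (n + 1) := n.lt_two_pow_self.trans (Nat.pow_lt_pow_succ one_lt_two)
  rw [D, getD_A_of_le (le_max_left m (n + 1)) h, getD_A_of_le (le_max_right m (n + 1)) hn]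

lemma D_two_mul (n : ℕ) : D (2 * n) = false := by
  rw [D, A_succ]; exact getD_subW_two_mul _ n

lemma D_two_mul_add_one (n : ℕ) : D (2 * n + 1) = !D n := by
  have hn : n < 2 ^ (2 * n + 1) :=
    n.lt_two_pow_self.trans_le (Nat.pow_le_pow_right two_pos (by omega))
  rw [D, A_succ, getD_subW_two_mul_add_one (by rwa [length_A]), getD_A hn]

lemma D_eq_false_of_mod_two_eq_zero {n : ℕ} (h : n % 2 = 0) : D n = false := by
  simpa [show 2 * (n / 2) = n by omega] using D_two_mul (n / 2)

lemma mod_two_eq_one_of_D_eq_true {n : ℕ} (h : D n = true) : n % 2 = 1 := by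
  by_contra h₀
  rw [D_eq_false_of_mod_two_eq_zero (by omega)] at h
  contradiction

lemma D_one : D 1 = true := by simpa [D_two_mul 0] using D_two_mul_add_one 0

lemma D_succ_eq_false_of_eq_true {n : ℕ} (h : D n = true) : D (n + 1) = false :=
  D_eq_false_of_mod_two_eq_zero (by have := mod_two_eq_one_of_D_eq_true h; omega)

lemma two_mul_add_one_mod_two_mul (u M : ℕ) : (2 * u + 1) % (2 * M) = 2 * (u % M) + 1 := by
  rcases M.eq_zero_or_pos with rfl | hM
  · simp
  calc (2 * u + 1) % (2 * M) = (2 * (u % M) + 1 + 2 * M * (u / M)) % (2 * M) := by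
        congr 1; linarith [Nat.div_add_mod u M]
    _ = 2 * (u % M) + 1 := by
        rw [Nat.add_mul_mod_self_left, Nat.mod_eq_of_lt (by linarith [Nat.mod_lt u hM])]

lemma D_two_pow_mul_add {n : ℕ} (hn : D n = true) (e : ℕ) {r : ℕ} (hr : r + 1 < 4 * 2 ^ e) :
    D (2 ^ (e + 1) * n + r) = D (r % 2 ^ e) := by
  induction e generalizing r with
  | zero =>
    have hn2 := mod_two_eq_one_of_D_eq_true hn
    obtain rfl | rfl | rfl : r = 0 ∨ r = 1 ∨ r = 2 := by omega
    all_goals simp only [zero_add, pow_one, pow_zero, Nat.mod_one, D_two_mul 0]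
    · exact D_two_mul n
    · rw [D_two_mul_add_one, hn]; rfl
    · exact D_eq_false_of_mod_two_eq_zero (by omega)
  | succ e ih =>
    obtain ⟨u, rfl | rfl⟩ : ∃ u, r = 2 * u ∨ r = 2 * u + 1 := ⟨r / 2, by omega⟩
    · rw [pow_succ' _ e, Nat.mul_mod_mul_left, D_two_mul,
        show 2 ^ (e + 1 + 1) * n + 2 * u = 2 * (2 ^ (e + 1) * n + u) by ring, D_two_mul]
    · rw [pow_succ' _ e, two_mul_add_one_mod_two_mul, D_two_mul_add_one,
        show 2 ^ (e + 1 + 1) * n + (2 * u + 1) = 2 * (2 ^ (e + 1) * n + u) + 1 by ring,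
        D_two_mul_add_one, ih (by rw [pow_succ] at hr; omega)]

lemma D_two_pow_add {e o : ℕ} (h : o + 1 < 4 * 2 ^ e) : D (2 ^ (e + 1) + o) = D (o % 2 ^ e) := by
  simpa using D_two_pow_mul_add D_one e h

def HasSquareAt (t q : ℕ) : Prop := ∀ i < q, D (t + i) = D (t + q + i)

lemma HasSquareAt.half {t q : ℕ} (h : HasSquareAt t (2 * q)) : HasSquareAt (t / 2) q := by
  intro i hi
  have := h (2 * i + 1 - t % 2) (by omega)
  rwa [show t + (2 * i + 1 - t % 2) = 2 * (t / 2 + i) + 1 by omega,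
    show t + 2 * q + (2 * i + 1 - t % 2) = 2 * (t / 2 + q + i) + 1 by omega,
    D_two_mul_add_one, D_two_mul_add_one, Bool.not_inj_iff] at this

lemma HasSquareAt.D_eq_false_of_odd {t q j : ℕ} (hq : q % 2 = 1) (h : HasSquareAt t q)
    (htj : t ≤ j) (hjt : j < t + 2 * q) : D j = false := by
  rcases Nat.mod_two_eq_zero_or_one j with hj | hj
  · exact D_eq_false_of_mod_two_eq_zero hj
  rcases lt_or_ge j (t + q) with hlt | hge
  · have := h (j - t) (by omega)
    rwa [show t + (j - t) = j by omega, show t + q + (j - t) = j + q by omega,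
      D_eq_false_of_mod_two_eq_zero (n := j + q) (by omega)] at this
  · have := h (j - t - q) (by omega)
    rw [show t + q + (j - t - q) = j by omega, D_eq_false_of_mod_two_eq_zero (n := t + (j - t - q))
      (by omega)] at this
    exact this.symm

lemma HasSquareAt.eq_one_of_odd {t q : ℕ} (hq : q % 2 = 1) (h : HasSquareAt t q) :
    q = 1 ∧ D (t / 2) = true := by
  have odd_false (s : ℕ) (hs : 2 * s + 1 < t + 2 * q) (hts : t ≤ 2 * s + 1) : D s = true := by
    simpa [D_two_mul_add_one] using h.D_eq_false_of_odd hq hts hs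
  have hD : D (t / 2) = true := odd_false _ (by omega) (by omega)
  refine ⟨?_, hD⟩
  by_contra hq1
  have := D_succ_eq_false_of_eq_true hD
  rw [odd_false (t / 2 + 1) (by omega) (by omega)] at this
  contradiction

lemma HasSquareAt.exists_eq_two_pow {t q : ℕ} (hq : 0 < q) (h : HasSquareAt t q) :
    ∃ e, q = 2 ^ e ∧ D (t / 2 ^ (e + 1)) = true := by
  induction q using Nat.strong_induction_on generalizing t with
  | _ q ih =>
    obtain ⟨q', rfl | rfl⟩ : ∃ q', q = 2 * q' ∨ q = 2 * q' + 1 := ⟨q / 2, by omega⟩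
    · obtain ⟨e, rfl, he⟩ := ih q' (by omega) (by omega) h.half
      exact ⟨e + 1, by ring, by rwa [Nat.div_div_eq_div_mul, ← pow_succ'] at he⟩
    · obtain ⟨h1, hD⟩ := h.eq_one_of_odd (by omega)
      exact ⟨0, h1, hD⟩

theorem fourth_power_free {q : ℕ} (hq : 0 < q) (t : ℕ) :
    ¬ ∀ k < 3 * q, D (t + k) = D (t + q + k) := by
  intro h
  obtain ⟨e, rfl, h₁⟩ := HasSquareAt.exists_eq_two_pow hq (t := t) fun i hi => h i (by omega)
  obtain ⟨e', he, h₂⟩ := HasSquareAt.exists_eq_two_pow hq (t := t + 2 ^ (e + 1)) fun i hi => by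
    rw [add_assoc t, show t + 2 ^ (e + 1) + 2 ^ e + i = t + 2 ^ e + (2 ^ (e + 1) + i) by ring]
    exact h (2 ^ (e + 1) + i) (by rw [pow_succ]; omega)
  obtain rfl := Nat.pow_right_injective le_rfl he.symm
  rw [Nat.add_div_right _ (by positivity), D_succ_eq_false_of_eq_true h₁] at h₂
  contradiction

def factorAt (t n : ℕ) : List Bool := (List.range n).map fun i => D (t + i)

@[simp] lemma length_factorAt (t n : ℕ) : (factorAt t n).length = n := by simp [factorAt]

@[simp] lemma getElem_factorAt {t n k : ℕ} (h : k < (factorAt t n).length) :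
    (factorAt t n)[k] = D (t + k) := by
  simp [factorAt]

lemma factorAt_add (t m n : ℕ) : factorAt t (m + n) = factorAt t m ++ factorAt (t + m) n := by
  simp [factorAt, List.range_add, add_assoc]

lemma factorAt_eq_factorAt_iff {s t n : ℕ} :
    factorAt s n = factorAt t n ↔ ∀ k < n, D (s + k) = D (t + k) := by
  simp [factorAt, List.map_inj_left]

lemma occursD_iff {w : List Bool} {j : ℕ} :
    OccursD w j ↔ 1 ≤ j ∧ factorAt (j - 1) w.length = w := by
  refine and_congr_right fun _ => ?_
  simp only [List.ext_getElem_iff, length_factorAt, getElem_factorAt, true_and]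
  exact ⟨fun h k hk _ => by rw [h k hk, List.getD_eq_getElem], fun h k hk => by
    rw [h k hk hk, List.getD_eq_getElem]⟩

lemma OccursD.of_append {u v : List Bool} {j : ℕ} (h : OccursD (u ++ v) j) : OccursD u j :=
  ⟨h.1, fun k hk => by
    have := h.2 k (by simp only [List.length_append]; omega)
    rwa [List.getD_append _ _ _ _ hk] at this⟩

def root (e o : ℕ) : List Bool := factorAt (2 ^ (e + 1) + o) (2 ^ e)

lemma factorAt_eq_flatten_replicate_root {k e o : ℕ} (hk : k ≤ 3) (ho : o < 2 ^ e) :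
    factorAt (2 ^ (e + 1) + o) (k * 2 ^ e) = (List.replicate k (root e o)).flatten := by
  induction k with
  | zero => simp [factorAt]
  | succ k ih =>
    rw [Nat.succ_mul, factorAt_add, ih (by omega), List.replicate_succ', List.flatten_append,
      List.flatten_singleton, root, factorAt_eq_factorAt_iff.2]
    intro i hi
    have hk2 : k * 2 ^ e ≤ 2 * 2 ^ e := Nat.mul_le_mul_right _ (by omega)
    rw [show 2 ^ (e + 1) + o + k * 2 ^ e + i = 2 ^ (e + 1) + (o + i + k * 2 ^ e) by ring,
      D_two_pow_add (by omega), Nat.add_mul_mod_self_right, add_assoc, D_two_pow_add (by omega)]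

lemma occursD_flatten_replicate_root {k e o : ℕ} (hk : k ≤ 3) (ho : o < 2 ^ e) :
    OccursD (List.replicate k (root e o)).flatten (2 ^ (e + 1) + o + 1) := by
  rw [occursD_iff, ← factorAt_eq_flatten_replicate_root hk ho]
  simp

lemma eq_of_root_eq_root {e o₁ o₂ : ℕ} (h₁ : o₁ < 2 ^ e) (h₂ : o₂ < 2 ^ e)
    (h : root e o₁ = root e o₂) : o₁ = o₂ := by
  have hcube : ∀ k < 3 * 2 ^ e, D (2 ^ (e + 1) + o₁ + k) = D (2 ^ (e + 1) + o₂ + k) := by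
    rw [← factorAt_eq_factorAt_iff, factorAt_eq_flatten_replicate_root le_rfl h₁,
      factorAt_eq_flatten_replicate_root le_rfl h₂, h]
  wlog hlt : o₁ < o₂ generalizing o₁ o₂
  · rcases (not_lt.1 hlt).lt_or_eq with hgt | heq
    · exact (this h₂ h₁ h.symm (fun k hk => (hcube k hk).symm) hgt).symm
    · exact heq.symm
  refine absurd (fun k hk => ?_) (fourth_power_free (q := o₂ - o₁) (by omega) (2 ^ (e + 1) + o₁))
  rw [hcube k (by omega)]
  congr 1
  omega

lemma exists_root_of_occursD {w : List Bool} (hw : w ≠ []) {j : ℕ} (h : OccursD (w ++ w) j) :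
    ∃ e o, o < 2 ^ e ∧ 2 ^ (e + 1) + o < j ∧ w = root e o := by
  obtain ⟨hj, hfac⟩ := occursD_iff.1 h
  set t := j - 1
  rw [List.length_append, factorAt_add] at hfac
  obtain ⟨hw₁, hw₂⟩ := List.append_inj hfac (by simp)
  have hsq : HasSquareAt t w.length := factorAt_eq_factorAt_iff.1 (hw₁.trans hw₂.symm)
  obtain ⟨e, hq, hn⟩ := hsq.exists_eq_two_pow (List.length_pos_iff.2 hw)
  have hpow : 2 ^ (e + 1) = 2 * 2 ^ e := pow_succ' 2 e
  have hdiv := Nat.div_add_mod t (2 ^ (e + 1))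
  have hr : t % 2 ^ (e + 1) < 2 ^ (e + 1) := Nat.mod_lt _ (by positivity)
  have hmod : t % 2 ^ (e + 1) % 2 ^ e = t % 2 ^ e := Nat.mod_mod_of_dvd t (pow_dvd_pow 2 e.le_succ)
  refine ⟨e, t % 2 ^ e, Nat.mod_lt _ (by positivity), ?_, ?_⟩
  · have hn₀ : 0 < t / 2 ^ (e + 1) :=
      Nat.pos_of_ne_zero fun h₀ => by simpa [h₀] using mod_two_eq_one_of_D_eq_true hn
    have := Nat.le_mul_of_pos_right (2 ^ (e + 1)) hn₀
    have := Nat.mod_le (t % 2 ^ (e + 1)) (2 ^ e)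
    omega
  · rw [← hw₁, root, hq, factorAt_eq_factorAt_iff]
    intro k hk
    calc D (t + k) = D (2 ^ (e + 1) * (t / 2 ^ (e + 1)) + (t % 2 ^ (e + 1) + k)) := by
          rw [← add_assoc, hdiv]
      _ = D ((t % 2 ^ e + k) % 2 ^ e) := by
          rw [D_two_pow_mul_add hn e (by omega), ← Nat.mod_add_mod, hmod]
      _ = D (2 ^ (e + 1) + t % 2 ^ e + k) := by
          rw [add_assoc, D_two_pow_add (by have := Nat.mod_lt t (Nat.two_pow_pos e); omega)]

def powersOccurringBy (k N : ℕ) : Set (List Bool) :=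
  {v | (∃ w : List Bool, w ≠ [] ∧ v = (List.replicate k w).flatten) ∧
    ∃ j, 1 ≤ j ∧ j ≤ N ∧ OccursD v j}

def rootIndices (N : ℕ) : Set (ℕ × ℕ) := {p | p.2 < 2 ^ p.1 ∧ 2 ^ (p.1 + 1) + p.2 < N}

@[simp] lemma mem_rootIndices {N e o : ℕ} :
    (e, o) ∈ rootIndices N ↔ o < 2 ^ e ∧ 2 ^ (e + 1) + o < N := Iff.rfl

lemma powersOccurringBy_eq_image {k : ℕ} (hk₂ : 2 ≤ k) (hk₃ : k ≤ 3) (N : ℕ) :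
    powersOccurringBy k N =
      (fun p : ℕ × ℕ => (List.replicate k (root p.1 p.2)).flatten) '' rootIndices N := by
  ext v
  constructor
  · rintro ⟨⟨w, hw, rfl⟩, j, -, hjN, hocc⟩
    obtain ⟨k, rfl⟩ := Nat.exists_eq_add_of_le' hk₂
    have hsq : OccursD (w ++ w) j := by
      simp only [List.replicate_succ, List.flatten_cons, ← List.append_assoc] at hocc
      exact hocc.of_append
    obtain ⟨e, o, ho, hoj, rfl⟩ := exists_root_of_occursD hw hsq
    exact ⟨(e, o), mem_rootIndices.2 ⟨ho, by omega⟩, rfl⟩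
  · rintro ⟨⟨e, o⟩, hmem, rfl⟩
    obtain ⟨ho, hoN⟩ := mem_rootIndices.1 hmem
    refine ⟨⟨root e o, ?_, rfl⟩, _, by omega, hoN, occursD_flatten_replicate_root hk₃ ho⟩
    rw [← List.length_pos_iff, root, length_factorAt]
    positivity

lemma eq_of_flatten_replicate_eq {k : ℕ} (hk : k ≠ 0) {u v : List Bool} (hl : u.length = v.length)
    (h : (List.replicate k u).flatten = (List.replicate k v).flatten) : u = v := by
  obtain ⟨k, rfl⟩ := Nat.exists_eq_succ_of_ne_zero hk
  simp only [List.replicate_succ, List.flatten_cons] at h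
  exact (List.append_inj h hl).1

lemma ncard_powersOccurringBy {k : ℕ} (hk₂ : 2 ≤ k) (hk₃ : k ≤ 3) (N : ℕ) :
    (powersOccurringBy k N).ncard = (rootIndices N).ncard := by
  rw [powersOccurringBy_eq_image hk₂ hk₃, Set.InjOn.ncard_image]
  rintro ⟨e₁, o₁⟩ hp₁ ⟨e₂, o₂⟩ hp₂ h
  obtain ⟨h₁, -⟩ := mem_rootIndices.1 hp₁
  obtain ⟨h₂, -⟩ := mem_rootIndices.1 hp₂
  have hlen := congrArg List.length h
  simp only [List.length_flatten, List.map_replicate, List.sum_replicate, root, length_factorAt,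
    smul_eq_mul] at hlen
  obtain rfl : e₁ = e₂ :=
    Nat.pow_right_injective le_rfl (Nat.eq_of_mul_eq_mul_left (by omega) hlen)
  rw [eq_of_root_eq_root h₁ h₂ (eq_of_flatten_replicate_eq (by omega) (by simp [root]) h)]

lemma rootIndices_finite (N : ℕ) : (rootIndices N).Finite := by
  refine ((Set.finite_Iio N).prod (Set.finite_Iio N)).subset fun ⟨e, o⟩ hp => ?_
  have h := (mem_rootIndices.1 hp).2
  have := e.lt_two_pow_self.trans (Nat.pow_lt_pow_succ one_lt_two)
  exact ⟨by simp only [Set.mem_Iio]; omega, by simp only [Set.mem_Iio]; omega⟩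

lemma eq_of_two_pow_le_of_lt_three_mul {a b n : ℕ} (ha : 2 ^ (a + 1) ≤ n) (ha' : n < 3 * 2 ^ a)
    (hb : 2 ^ (b + 1) ≤ n) (hb' : n < 3 * 2 ^ b) : a = b := by
  have log_eq {c : ℕ} (hc : 2 ^ (c + 1) ≤ n) (hc' : n < 3 * 2 ^ c) : Nat.log 2 n = c + 1 :=
    Nat.log_eq_of_pow_le_of_lt_pow hc (by rw [pow_succ, pow_succ]; omega)
  have := (log_eq ha ha').symm.trans (log_eq hb hb')
  omega

lemma rootIndices_succ_of_mem {N e : ℕ} (h : 2 ^ (e + 1) ≤ N) (h' : N < 3 * 2 ^ e) :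
    rootIndices (N + 1) = insert (e, N - 2 ^ (e + 1)) (rootIndices N) := by
  ext ⟨a, b⟩
  simp only [mem_rootIndices, Set.mem_insert_iff, Prod.mk.injEq]
  constructor
  · rintro ⟨hb, hbN⟩
    rcases (Nat.lt_succ_iff.1 hbN).lt_or_eq with hlt | heq
    · exact Or.inr ⟨hb, hlt⟩
    · have ha : 2 ^ (a + 1) = 2 * 2 ^ a := pow_succ' 2 a
      obtain rfl := eq_of_two_pow_le_of_lt_three_mul (a := a) (by omega) (by omega) h h'
      exact Or.inl ⟨rfl, by omega⟩
  · rintro (⟨rfl, rfl⟩ | ⟨hb, hbN⟩)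
    · have : 2 ^ (a + 1) = 2 * 2 ^ a := pow_succ' 2 a
      omega
    · exact ⟨hb, by omega⟩

lemma rootIndices_succ_of_not_mem {N : ℕ} (h : ¬ ∃ e, 2 ^ (e + 1) ≤ N ∧ N < 3 * 2 ^ e) :
    rootIndices (N + 1) = rootIndices N := by
  ext ⟨a, b⟩
  simp only [mem_rootIndices]
  refine ⟨fun ⟨hb, hbN⟩ => ⟨hb, ?_⟩, fun ⟨hb, hbN⟩ => ⟨hb, by omega⟩⟩
  by_contra hN
  have : 2 ^ (a + 1) = 2 * 2 ^ a := pow_succ' 2 a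
  exact h ⟨a, by omega, by omega⟩

lemma csq_eq_ncard (N : ℕ) : csq N = (rootIndices N).ncard := by
  rw [← ncard_powersOccurringBy le_rfl (by norm_num) N, csq, powersOccurringBy]
  simp [List.replicate_succ]

lemma ccube_eq_ncard (N : ℕ) : ccube N = (rootIndices N).ncard := by
  rw [← ncard_powersOccurringBy (by norm_num) le_rfl N, ccube, powersOccurringBy]
  simp [List.replicate_succ]

end PD

theorem doubling_count_squares_general (N : ℕ) :
    ((∃ m : ℕ, 1 ≤ m ∧ 2 ^ m ≤ N ∧ N < 3 * 2 ^ (m - 1)) → csq (N + 1) = csq N + 1) ∧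
      (¬ (∃ m : ℕ, 1 ≤ m ∧ 2 ^ m ≤ N ∧ N < 3 * 2 ^ (m - 1)) → csq (N + 1) = csq N) ∧
      ccube N = csq N := by
  have hcond : (∃ m : ℕ, 1 ≤ m ∧ 2 ^ m ≤ N ∧ N < 3 * 2 ^ (m - 1)) ↔
      ∃ e, 2 ^ (e + 1) ≤ N ∧ N < 3 * 2 ^ e :=
    ⟨fun ⟨m, hm, h⟩ => ⟨m - 1, by rwa [Nat.sub_add_cancel hm]⟩,
      fun ⟨e, h⟩ => ⟨e + 1, by omega, by rwa [Nat.add_sub_cancel]⟩⟩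
  simp only [hcond, csq_eq_ncard, ccube_eq_ncard]
  refine ⟨fun ⟨e, h, h'⟩ => ?_, fun h => by rw [rootIndices_succ_of_not_mem h], trivial⟩
  rw [rootIndices_succ_of_mem h h',
    Set.ncard_insert_of_notMem (by rw [mem_rootIndices]; omega) (rootIndices_finite N)]

/-- Counting squares and cubes: for every `N ≥ 1`, `c(N+1) − c(N) = 1` iff
`2^m ≤ N < 3·2^(m-1)` for some `m ≥ 1`, and `c(N+1) = c(N)` otherwise; moreover
the number of distinct cubes beginning in `D∞[1,N]` equals `c(N)` as well. -/
theorem doubling_count_squares (N : ℕ) (hN : 1 ≤ N) :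
    ((∃ m : ℕ, 1 ≤ m ∧ 2 ^ m ≤ N ∧ N < 3 * 2 ^ (m - 1)) → csq (N + 1) = csq N + 1) ∧
      (¬ (∃ m : ℕ, 1 ≤ m ∧ 2 ^ m ≤ N ∧ N < 3 * 2 ^ (m - 1)) → csq (N + 1) = csq N) ∧
      ccube N = csq N :=
  doubling_count_squares_general N
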